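/- For any prime p and positive integer a, the alternating sum ∑_{k=1}^{p^a-1} (-1)^k · B_k of Bell numbers is congruent to a modulo p. -/

import Mathlib

/-!
Let `φ` be the linear functional on polynomials with `φ (X ^ n) = B_n`. Expanding
`X ^ n = ∑ S(n, k) • (X)_k` in falling factorials shows `φ (X)_k = 1` for every `k`, and testing
on falling factorials gives `φ (X * f) = φ (f.comp (X + 1))`. For `f = ∑_{k<N} (1 - X) ^ k` we
have `X * f = 1 - (1 - X) ^ N` and `f.comp (X + 1) = ∑_{k<N} (-X) ^ k`, so
`∑_{k<N} (-1) ^ k B_k = φ (1 - (1 - X) ^ N)`, which is `φ (X ^ N)` modulo `p` when `N = p ^ a`.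
Over `ZMod p` the falling factorial `(X)_p` is `X ^ p - X`, so `(X)_(p+k) = (X ^ p - X) * (X)_k`
and multiplication by `X ^ p - X` preserves `φ`; as
`X ^ p ^ (a + 1) = X ^ p ^ a + (X ^ p - X) ^ p ^ a`, this gives `φ (X ^ p ^ a) = a + 1`.
Dropping the term `B_0 = 1` leaves `a`.
-/

/-- Stirling numbers of the second kind. -/
def stirling2 : ℕ → ℕ → ℕ
  | 0, 0 => 1
  | 0, _ + 1 => 0
  | _ + 1, 0 => 0
  | n + 1, k + 1 => (k + 1) * stirling2 n (k + 1) + stirling2 n k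

/-- The Bell numbers: the number of partitions of an `n`-element set. -/
def bell (n : ℕ) : ℕ := ∑ k ∈ Finset.range (n + 1), stirling2 n k

open Polynomial Finset

theorem stirling2_eq_stirlingSecond : stirling2 = Nat.stirlingSecond := by
  funext n k
  induction n generalizing k with
  | zero => cases k <;> rfl
  | succ n ih => cases k <;> simp [stirling2, Nat.stirlingSecond_succ_succ, ih]

theorem bell_eq_sum_stirlingSecond (n : ℕ) :
    bell n = ∑ k ∈ range (n + 1), Nat.stirlingSecond n k := by
  rw [bell, stirling2_eq_stirlingSecond]

section CommRing

variable {R : Type*} [CommRing R]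

theorem X_mul_descPochhammer (k : ℕ) :
    X * descPochhammer R k = descPochhammer R (k + 1) + k • descPochhammer R k := by
  rw [descPochhammer_succ_right, nsmul_eq_mul]
  ring

theorem descPochhammer_succ_comp_X_add_one (k : ℕ) :
    (descPochhammer R (k + 1)).comp (X + 1) = (X + 1) * descPochhammer R k := by
  rw [descPochhammer_succ_left, mul_comp, X_comp, comp_assoc, sub_comp, X_comp, one_comp,
    add_sub_cancel_right, comp_X]

theorem X_pow_eq_sum_stirlingSecond_smul_descPochhammer (n : ℕ) :
    (X : R[X]) ^ n = ∑ k ∈ range (n + 1), Nat.stirlingSecond n k • descPochhammer R k := by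
  induction n with
  | zero => simp
  | succ n ih =>
    set g : ℕ → R[X] := fun k => (k * Nat.stirlingSecond n k) • descPochhammer R k
    have hshift : ∑ k ∈ range (n + 1), g (k + 1) = ∑ k ∈ range (n + 1), g k := by
      have h := (sum_range_succ' g (n + 1)).symm.trans (sum_range_succ g (n + 1))
      simpa [g, Nat.stirlingSecond_eq_zero_of_lt (Nat.lt_succ_self n)] using h
    calc (X : R[X]) ^ (n + 1)
        = ∑ k ∈ range (n + 1), (Nat.stirlingSecond n k • descPochhammer R (k + 1) + g k) := by
          rw [pow_succ', ih, mul_sum]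
          refine sum_congr rfl fun k _ => ?_
          rw [mul_smul_comm, X_mul_descPochhammer, smul_add, smul_smul, mul_comm]
      _ = ∑ k ∈ range (n + 1), Nat.stirlingSecond (n + 1) (k + 1) • descPochhammer R (k + 1) := by
          simp only [Nat.stirlingSecond_succ_succ, add_smul, sum_add_distrib, ← hshift, g]
          rw [add_comm]
      _ = _ := by
          rw [sum_range_succ' _ (n + 1), Nat.stirlingSecond_succ_zero, zero_smul, add_zero]

variable (R) in
noncomputable def bellFunctional : R[X] →ₗ[R] R :=
  lsum fun n => (bell n : R) • LinearMap.id

theorem bellFunctional_X_pow (n : ℕ) : bellFunctional R (X ^ n) = bell n := by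
  simp [bellFunctional, ← monomial_one_right_eq_X_pow]

theorem bellFunctional_descPochhammer (k : ℕ) : bellFunctional R (descPochhammer R k) = 1 := by
  induction k using Nat.strong_induction_on with
  | _ k ih =>
    have h := congrArg (bellFunctional R) (X_pow_eq_sum_stirlingSecond_smul_descPochhammer k)
    rw [bellFunctional_X_pow, bell_eq_sum_stirlingSecond, map_sum, sum_range_succ, sum_range_succ,
      Nat.stirlingSecond_self, one_smul, Nat.cast_add, Nat.cast_one, Nat.cast_sum] at h
    have hlow : ∀ j ∈ range k,
        bellFunctional R (k.stirlingSecond j • descPochhammer R j) = k.stirlingSecond j :=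
      fun j hj => by rw [map_nsmul, ih j (mem_range.1 hj), nsmul_one]
    rw [sum_congr rfl hlow] at h
    exact (add_left_cancel h).symm

theorem bellFunctional_one : bellFunctional R 1 = 1 := by
  simpa using bellFunctional_descPochhammer (R := R) 0

theorem descPochhammer_linearMap_ext {M : Type*} [AddCommMonoid M] [Module R M]
    {f g : R[X] →ₗ[R] M} (h : ∀ k, f (descPochhammer R k) = g (descPochhammer R k)) : f = g := by
  refine lhom_ext' fun n => LinearMap.ext_ring ?_
  simp only [LinearMap.comp_apply, monomial_one_right_eq_X_pow,
    X_pow_eq_sum_stirlingSecond_smul_descPochhammer, map_sum, map_nsmul, h]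

theorem bellFunctional_X_mul (f : R[X]) :
    bellFunctional R (X * f) = bellFunctional R (f.comp (X + 1)) := by
  have key : (bellFunctional R).comp (LinearMap.mulLeft R X)
      = (bellFunctional R).comp (aeval (X + 1 : R[X])).toLinearMap := by
    refine descPochhammer_linearMap_ext fun k => ?_
    simp only [LinearMap.comp_apply, LinearMap.mulLeft_apply, AlgHom.toLinearMap_apply,
      ← comp_eq_aeval, X_mul_descPochhammer, map_add, map_nsmul, bellFunctional_descPochhammer]
    cases k with
    | zero => simp [bellFunctional_one]
    | succ k =>
      rw [descPochhammer_succ_comp_X_add_one, add_mul, one_mul, X_mul_descPochhammer, map_add,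
        map_add, map_nsmul, bellFunctional_descPochhammer, bellFunctional_descPochhammer]
      ring
  simpa [← comp_eq_aeval] using LinearMap.congr_fun key f

theorem sum_range_neg_one_pow_mul_bell (N : ℕ) :
    ∑ k ∈ range N, (-1) ^ k * (bell k : R) = bellFunctional R (1 - (1 - X) ^ N) := by
  calc ∑ k ∈ range N, (-1) ^ k * (bell k : R)
      = bellFunctional R (∑ k ∈ range N, (-X : R[X]) ^ k) := by
        refine (map_sum _ _ _).trans (sum_congr rfl fun k _ => ?_) |>.symm
        rw [neg_pow, ← C_1, ← C_neg, ← C_pow, ← smul_eq_C_mul, map_smul, bellFunctional_X_pow,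
          smul_eq_mul]
    _ = bellFunctional R ((∑ k ∈ range N, (1 - X : R[X]) ^ k).comp (X + 1)) := by
        simp only [Polynomial.sum_comp, pow_comp, sub_comp, one_comp, X_comp, sub_add_cancel_right]
    _ = bellFunctional R (1 - (1 - X) ^ N) := by
        rw [← bellFunctional_X_mul, ← mul_neg_geom_sum, sub_sub_cancel]

end CommRing

section ZMod

variable {p : ℕ} [Fact p.Prime]

theorem descPochhammer_zmod_self : descPochhammer (ZMod p) p = X ^ p - X := by
  have hp : p.Prime := Fact.out
  have hff : IsMonicOfDegree (descPochhammer (ZMod p) p) p :=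
    ⟨descPochhammer_natDegree _ p, monic_descPochhammer _ p⟩
  have hXp : IsMonicOfDegree (X ^ p - X : (ZMod p)[X]) p :=
    (isMonicOfDegree_X_pow (R := ZMod p) p).sub (by simpa using hp.one_lt)
  refine sub_eq_zero.1 <| eq_zero_of_natDegree_lt_card_of_eval_eq_zero _ Function.injective_id
    (fun x => ?_) ((hff.natDegree_sub_lt hp.ne_zero hXp).trans_eq (ZMod.card p).symm)
  rw [eval_sub, id, ← ZMod.natCast_zmod_val x, descPochhammer_eval_coe_nat_of_lt (ZMod.val_lt x)]
  simp [ZMod.pow_card]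

theorem bellFunctional_X_pow_sub_X_mul (f : (ZMod p)[X]) :
    bellFunctional (ZMod p) ((X ^ p - X) * f) = bellFunctional (ZMod p) f := by
  have key : (bellFunctional (ZMod p)).comp (LinearMap.mulLeft (ZMod p) (X ^ p - X))
      = bellFunctional (ZMod p) := by
    refine descPochhammer_linearMap_ext fun k => ?_
    have hmul := descPochhammer_mul (ZMod p) p k
    rw [CharP.cast_eq_zero, sub_zero, comp_X] at hmul
    rw [LinearMap.comp_apply, LinearMap.mulLeft_apply, ← descPochhammer_zmod_self, hmul,
      bellFunctional_descPochhammer, bellFunctional_descPochhammer]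
  exact LinearMap.congr_fun key f

theorem bellFunctional_X_pow_prime_pow (a : ℕ) :
    bellFunctional (ZMod p) (X ^ p ^ a) = a + 1 := by
  induction a with
  | zero => simpa [show bell 1 = 1 from rfl] using bellFunctional_X_pow (R := ZMod p) 1
  | succ a ih =>
    have h : (X : (ZMod p)[X]) ^ p ^ (a + 1) = (X ^ p - X) ^ p ^ a + X ^ p ^ a := by
      rw [sub_pow_char_pow, ← pow_mul, ← pow_succ']
      ring
    have hpow (m : ℕ) : bellFunctional (ZMod p) ((X ^ p - X) ^ m) = 1 := by
      induction m with
      | zero => exact bellFunctional_one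
      | succ m ihm => rw [pow_succ', bellFunctional_X_pow_sub_X_mul, ihm]
    rw [h, map_add, hpow, ih]
    push_cast
    ring

end ZMod

theorem alt_sum_bell_general (p : ℕ) [Fact p.Prime] (a : ℕ) :
    (∑ k ∈ Finset.Icc 1 (p ^ a - 1), (-1 : ℤ) ^ k * bell k) ≡ (a : ℤ) [ZMOD p] := by
  obtain ⟨N, hN⟩ : ∃ N, p ^ a = N + 1 :=
    Nat.exists_eq_add_one.2 (pow_pos (Fact.out : p.Prime).pos a)
  have h := sum_range_neg_one_pow_mul_bell (R := ZMod p) (p ^ a)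
  rw [sub_pow_char_pow, one_pow, sub_sub_cancel, bellFunctional_X_pow_prime_pow, hN, range_eq_Ico,
    sum_eq_sum_Ico_succ_bot N.add_one_pos, zero_add, Ico_add_one_right_eq_Icc,
    show bell 0 = 1 from rfl, Nat.cast_one] at h
  rw [← ZMod.intCast_eq_intCast_iff, hN, Nat.add_sub_cancel]
  push_cast
  linear_combination h

/-- For a prime `p` and `a ≥ 1`, `∑_{k=1}^{p^a-1} (-1)^k B_k ≡ a (mod p)`. -/
theorem alt_sum_bell (p : ℕ) [Fact p.Prime] (a : ℕ) (ha : 0 < a) :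
    (∑ k ∈ Finset.Icc 1 (p ^ a - 1), (-1 : ℤ) ^ k * bell k) ≡ (a : ℤ) [ZMOD p] :=
  alt_sum_bell_general p a
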